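/- For any pairwise distinct i, j, k, l ∈ {1,…,9}, the composition J_{i,j,k,l} ∘ Mₗ of ℤ-linear endomorphisms of L_X equals the Kac translation T_{𝓔₀−𝓔ᵢ−𝓔ⱼ−𝓔ₖ}. -/

import Mathlib

open Finset

/-- `L_X`: the free ℤ-module with basis `𝓔₀, 𝓔₁, …, 𝓔₉`. -/
abbrev LX : Type := Fin 10 → ℤ

noncomputable def basisX : Module.Basis (Fin 10) ℤ LX := Pi.basisFun ℤ (Fin 10)

/-- The basis vector `𝓔ₐ` of `L_X`. -/
noncomputable def EX (a : Fin 10) : LX := basisX a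

/-- The symmetric bilinear form on `L_X` with `⟨𝓔₀,𝓔₀⟩ = 1`, `⟨𝓔ᵢ,𝓔ᵢ⟩ = -1` for
`i = 1,…,9`, and `⟨𝓔ₐ,𝓔_b⟩ = 0` for `a ≠ b`. -/
noncomputable def formX : LX →ₗ[ℤ] LX →ₗ[ℤ] ℤ :=
  Matrix.toLinearMap₂' ℤ (Matrix.diagonal (fun a : Fin 10 => if a = 0 then (1 : ℤ) else -1))

/-- The anticanonical class `δ = 3𝓔₀ - 𝓔₁ - ⋯ - 𝓔₉`. -/
noncomputable def deltaX : LX := (3 : ℤ) • EX 0 - ∑ k ∈ ({0} : Finset (Fin 10))ᶜ, EX k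

/-- The Kac translation `T_α(λ) = λ + ⟨δ,λ⟩α + (⟨δ,λ⟩ - ⟨α,λ⟩)δ` on `L_X`. -/
noncomputable def kacX (α : LX) : LX →ₗ[ℤ] LX :=
  LinearMap.id + (formX deltaX).smulRight α + (formX deltaX - formX α).smulRight deltaX

/-- The Manin involution action `Mᵢ` on `L_X` (for `i ∈ {1,…,9}`, i.e. `i ≠ 0`):
`Mᵢ(𝓔₀) = 5𝓔₀ - 4𝓔ᵢ - Σ_{k≠i}𝓔ₖ`, `Mᵢ(𝓔ᵢ) = 4𝓔₀ - 3𝓔ᵢ - Σ_{k≠i}𝓔ₖ`,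
`Mᵢ(𝓔ⱼ) = 𝓔₀ - 𝓔ᵢ - 𝓔ⱼ` for `j ≠ i`. -/
noncomputable def ManinX (i : Fin 10) : LX →ₗ[ℤ] LX :=
  basisX.constr ℤ (fun a =>
    if a = 0 then
      (5 : ℤ) • EX 0 - (4 : ℤ) • EX i - ∑ k ∈ ({0, i} : Finset (Fin 10))ᶜ, EX k
    else if a = i then
      (4 : ℤ) • EX 0 - (3 : ℤ) • EX i - ∑ k ∈ ({0, i} : Finset (Fin 10))ᶜ, EX k
    else EX 0 - EX i - EX a)

/-- The involution action `J_{i,j,k,l}` on `L_X` (for pairwise distinct `i,j,k,l ∈ {1,…,9}`):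
`J(𝓔₀) = 11𝓔₀ - 5(𝓔ᵢ+𝓔ⱼ+𝓔ₖ+𝓔ₗ) - 2Σ'𝓔ₘ`,
`J(𝓔ₐ) = 5𝓔₀ - 2(𝓔ᵢ+𝓔ⱼ+𝓔ₖ+𝓔ₗ) - 𝓔ₐ - Σ'𝓔ₘ` for `a ∈ {i,j,k,l}`,
`J(𝓔ₘ) = 2𝓔₀ - (𝓔ᵢ+𝓔ⱼ+𝓔ₖ+𝓔ₗ) - 𝓔ₘ` otherwise,
where `Σ'` is the sum over `m ∈ {1,…,9} \ {i,j,k,l}`. -/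
noncomputable def JX (i j k l : Fin 10) : LX →ₗ[ℤ] LX :=
  basisX.constr ℤ (fun a =>
    if a = 0 then
      (11 : ℤ) • EX 0 - (5 : ℤ) • (EX i + EX j + EX k + EX l)
        - (2 : ℤ) • ∑ m ∈ ({0, i, j, k, l} : Finset (Fin 10))ᶜ, EX m
    else if a = i ∨ a = j ∨ a = k ∨ a = l then
      (5 : ℤ) • EX 0 - (2 : ℤ) • (EX i + EX j + EX k + EX l) - EX a
        - ∑ m ∈ ({0, i, j, k, l} : Finset (Fin 10))ᶜ, EX m
    else (2 : ℤ) • EX 0 - (EX i + EX j + EX k + EX l) - EX a)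

lemma EX_apply (a b : Fin 10) : EX a b = if b = a then 1 else 0 := by
  simp [EX, basisX, Pi.basisFun_apply, Pi.single_apply]

lemma formX_apply (x y : LX) : formX x y = ∑ a, x a * ((if a = 0 then (1:ℤ) else -1) * y a) := by
  simp [formX, Matrix.toLinearMap₂'_apply, Matrix.diagonal, Finset.mul_sum]

lemma formX_EX (x : LX) (a : Fin 10) :
    formX x (EX a) = x a * (if a = 0 then (1:ℤ) else -1) := by
  rw [formX_apply, Finset.sum_eq_single a]
  · simp [EX_apply]
  · intro c _ hc; simp [EX_apply, hc]
  · simp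


set_option maxHeartbeats 2000000 in
/-- `J_{i,j,k,l} ∘ Mₗ` equals the Kac translation `T_{𝓔₀-𝓔ᵢ-𝓔ⱼ-𝓔ₖ}` on `L_X`. -/
theorem JX_comp_ManinX_eq_kacX (i j k l : Fin 10)
    (hi : i ≠ 0) (hj : j ≠ 0) (hk : k ≠ 0) (hl : l ≠ 0)
    (hij : i ≠ j) (hik : i ≠ k) (hil : i ≠ l) (hjk : j ≠ k) (hjl : j ≠ l) (hkl : k ≠ l) :
    JX i j k l ∘ₗ ManinX l = kacX (EX 0 - EX i - EX j - EX k) := by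
  obtain ⟨Q, hQ⟩ : ∃ Q : LX, Q = ∑ m ∈ ({0, i, j, k, l} : Finset (Fin 10))ᶜ, EX m := ⟨_, rfl⟩
  -- set decompositions
  have hS2 : ({0, l} : Finset (Fin 10))ᶜ = {i, j, k} ∪ ({0, i, j, k, l} : Finset (Fin 10))ᶜ := by
    ext x
    simp only [mem_compl, mem_insert, mem_singleton, mem_union]
    by_cases hxi : x = i <;> by_cases hxj : x = j <;> by_cases hxk : x = k <;>
      subst_vars <;> simp_all <;> tauto
  have hS1 : ({0} : Finset (Fin 10))ᶜ = {i, j, k, l} ∪ ({0, i, j, k, l} : Finset (Fin 10))ᶜ := by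
    ext x
    simp only [mem_compl, mem_insert, mem_singleton, mem_union]
    by_cases hxi : x = i <;> by_cases hxj : x = j <;> by_cases hxk : x = k <;>
      by_cases hxl : x = l <;> subst_vars <;> simp_all <;> tauto
  have hdisj2 : Disjoint ({i, j, k} : Finset (Fin 10)) ({0, i, j, k, l} : Finset (Fin 10))ᶜ := by
    rw [Finset.disjoint_left]
    intro x hx hx'
    simp only [mem_compl, mem_insert, mem_singleton] at hx hx'
    tauto
  have hdisj1 : Disjoint ({i, j, k, l} : Finset (Fin 10)) ({0, i, j, k, l} : Finset (Fin 10))ᶜ := by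
    rw [Finset.disjoint_left]
    intro x hx hx'
    simp only [mem_compl, mem_insert, mem_singleton] at hx hx'
    tauto
  have hsum2 : ∑ m ∈ ({0, l} : Finset (Fin 10))ᶜ, EX m = EX i + EX j + EX k + Q := by
    rw [hS2, Finset.sum_union hdisj2, hQ]
    have : ∑ m ∈ ({i, j, k} : Finset (Fin 10)), EX m = EX i + EX j + EX k := by
      rw [Finset.sum_insert (by simp [hij, hik]), Finset.sum_insert (by simp [hjk]),
        Finset.sum_singleton]
      abel
    rw [this]
  have hsum1 : ∑ m ∈ ({0} : Finset (Fin 10))ᶜ, EX m = EX i + EX j + EX k + EX l + Q := by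
    rw [hS1, Finset.sum_union hdisj1, hQ]
    have : ∑ m ∈ ({i, j, k, l} : Finset (Fin 10)), EX m = EX i + EX j + EX k + EX l := by
      rw [Finset.sum_insert (by simp [hij, hik, hil]), Finset.sum_insert (by simp [hjk, hjl]),
        Finset.sum_insert (by simp [hkl]), Finset.sum_singleton]
      abel
    rw [this]
  have hdelta : deltaX = (3 : ℤ) • EX 0 - EX i - EX j - EX k - EX l - Q := by
    rw [deltaX, hsum1]; abel
  have hcard : (({0, i, j, k, l} : Finset (Fin 10))ᶜ).card = 5 := by
    rw [Finset.card_compl]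
    have : ({0, i, j, k, l} : Finset (Fin 10)).card = 5 := by
      rw [Finset.card_insert_of_notMem (by simp [Ne.symm hi, Ne.symm hj, Ne.symm hk, Ne.symm hl]),
        Finset.card_insert_of_notMem (by simp [hij, hik, hil]),
        Finset.card_insert_of_notMem (by simp [hjk, hjl]),
        Finset.card_insert_of_notMem (by simp [hkl]), Finset.card_singleton]
    rw [this]; rfl
  -- values of JX on basis vectors
  have hJ0 : JX i j k l (EX 0) =
      (11 : ℤ) • EX 0 - (5 : ℤ) • (EX i + EX j + EX k + EX l) - (2 : ℤ) • Q := by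
    rw [hQ]; show JX i j k l (basisX 0) = _
    simp only [JX, Module.Basis.constr_basis]
    norm_num
  have hJmem : ∀ a : Fin 10, a ≠ 0 → (a = i ∨ a = j ∨ a = k ∨ a = l) →
      JX i j k l (EX a) =
        (5 : ℤ) • EX 0 - (2 : ℤ) • (EX i + EX j + EX k + EX l) - EX a - Q := by
    intro a ha0 ha
    rw [hQ]; show JX i j k l (basisX a) = _
    simp only [JX, Module.Basis.constr_basis, if_neg ha0, if_pos ha]
  have hJout : ∀ a : Fin 10, a ≠ 0 → ¬(a = i ∨ a = j ∨ a = k ∨ a = l) →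
      JX i j k l (EX a) = (2 : ℤ) • EX 0 - (EX i + EX j + EX k + EX l) - EX a := by
    intro a ha0 ha
    show JX i j k l (basisX a) = _
    simp only [JX, Module.Basis.constr_basis, if_neg ha0, if_neg ha]
  have hJQ : JX i j k l Q =
      (5 : ℤ) • ((2 : ℤ) • EX 0 - (EX i + EX j + EX k + EX l)) - Q := by
    rw [hQ, map_sum]
    rw [Finset.sum_congr rfl (fun m hm => by
      simp only [mem_compl, mem_insert, mem_singleton, not_or] at hm
      exact hJout m hm.1 (by tauto))]
    rw [Finset.sum_sub_distrib, Finset.sum_const, hcard]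
    simp only [← Nat.cast_smul_eq_nsmul ℤ]
    push_cast
    abel
  -- form values
  have sum_EX_apply : ∀ (s : Finset (Fin 10)) (b : Fin 10),
      (∑ m ∈ s, EX m) b = if b ∈ s then 1 else 0 := by
    intro s b
    simp [Finset.sum_apply, EX_apply, Finset.sum_ite_eq]
  have hfd : ∀ a : Fin 10, formX deltaX (EX a) = if a = 0 then 3 else 1 := by
    intro a
    rw [formX_EX]
    by_cases ha : a = 0 <;>
      simp [ha, deltaX, Pi.sub_apply, Pi.smul_apply, EX_apply, sum_EX_apply]
  have hfa : ∀ a : Fin 10, formX (EX 0 - EX i - EX j - EX k) (EX a) =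
      if a = 0 then 1 else if a = i ∨ a = j ∨ a = k then 1 else 0 := by
    intro a
    rw [formX_EX]
    by_cases ha0 : a = 0
    · simp [ha0, EX_apply, Ne.symm hi, Ne.symm hj, Ne.symm hk]
    · by_cases hai : a = i
      · simp [hai, EX_apply, hi, hij, hik]
      · by_cases haj : a = j
        · simp [haj, EX_apply, hj, Ne.symm hij, hjk]
        · by_cases hak : a = k
          · simp [hak, EX_apply, hk, Ne.symm hik, Ne.symm hjk]
          · simp [ha0, hai, haj, hak, EX_apply]
  have hJi := hJmem i hi (Or.inl rfl)
  have hJj := hJmem j hj (Or.inr (Or.inl rfl))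
  have hJk := hJmem k hk (Or.inr (Or.inr (Or.inl rfl)))
  have hJl := hJmem l hl (Or.inr (Or.inr (Or.inr rfl)))
  -- main computation on basis vectors
  apply basisX.ext
  intro a
  rw [LinearMap.comp_apply]
  simp only [kacX, LinearMap.add_apply, LinearMap.id_apply, LinearMap.smulRight_apply,
    LinearMap.sub_apply]
  rw [show (basisX a : LX) = EX a from rfl, hfd, hfa, hdelta]
  by_cases ha0 : a = 0
  · subst ha0
    have hMa : ManinX l (EX 0) =
        (5 : ℤ) • EX 0 - (4 : ℤ) • EX l - (EX i + EX j + EX k + Q) := by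
      show ManinX l (basisX 0) = _
      simp only [ManinX, Module.Basis.constr_basis]
      rw [hsum2]
      simp
    rw [hMa, map_sub, map_sub, map_smul, map_smul, map_add, map_add, map_add,
      hJ0, hJl, hJi, hJj, hJk, hJQ, if_pos rfl, if_pos rfl]
    module
  · by_cases hal : a = l
    · subst hal
      have hMa : ManinX a (EX a) =
          (4 : ℤ) • EX 0 - (3 : ℤ) • EX a - (EX i + EX j + EX k + Q) := by
        show ManinX a (basisX a) = _
        simp only [ManinX, Module.Basis.constr_basis]
        rw [hsum2]
        simp [hl]
      rw [hMa, map_sub, map_sub, map_smul, map_smul, map_add, map_add, map_add,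
        hJ0, hJl, hJi, hJj, hJk, hJQ, if_neg hl, if_neg hl,
        if_neg (by tauto : ¬(a = i ∨ a = j ∨ a = k))]
      module
    · have hMa : ManinX l (EX a) = EX 0 - EX l - EX a := by
        show ManinX l (basisX a) = _
        simp only [ManinX, Module.Basis.constr_basis]
        rw [if_neg ha0, if_neg hal]
      rw [hMa, map_sub, map_sub, hJ0, hJl, if_neg ha0, if_neg ha0]
      by_cases hmem : a = i ∨ a = j ∨ a = k
      · rw [hJmem a ha0 (by tauto), if_pos hmem]
        module
      · rw [hJout a ha0 (by tauto), if_neg hmem]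
        module
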